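/- arXiv:1104.1277 — 3 statements merged into one kernel-verified Lean document; each statement's English description precedes it below -/
import Mathlib

section
/- Let A be a digraph and U an independent subset of A (members have pairwise disjoint descendant sets). Let Q be a collection of pairwise disjoint subsets of U, and for each p ∈ Q let w_p be a vertex of A such that desc(w_p) = {w_p} ∪ ⋃_{u∈p} desc(u) (w_p is a common predecessor of the elements of p with no other descendants). Then U' := (U \ ⋃Q) ∪ {w_p : p ∈ Q} is an independent subset of A, provided the vertices w_p are distinct, not in U, and no w_p lies in desc(u) for u ∈ U \ ⋃Q or in desc(w_{p'}) for p' ≠ p. -/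
/-- The descendant set of `u`: all vertices reachable from `u` by a directed path
(including `u` itself). -/
def desc {V : Type*} (E : V → V → Prop) (u : V) : Set V :=
  {v | Relation.ReflTransGen E u v}

/-- A set is independent if the descendant sets of distinct members are disjoint. -/
def Independent {V : Type*} (E : V → V → Prop) (X : Set V) : Prop :=
  ∀ x ∈ X, ∀ y ∈ X, x ≠ y → desc E x ∩ desc E y = ∅

/-!
Every descendant of a new vertex `w p` is either `w p` itself or a descendant of some `u ∈ p`.
So two members of `U'` can only share a descendant if one of them is a descendant of the
other (excluded by hypothesis) or if two distinct members of `U` share one (excluded by the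
independence of `U`, using that the sets in `Q` are disjoint and miss `U \ ⋃₀ Q`).
-/

section

variable {V : Type*} {E : V → V → Prop}

theorem desc_subset_desc_of_mem {b c : V} {S : Set V} (hc : desc E c = {c} ∪ ⋃ s ∈ S, desc E s)
    (hb : b ∈ S) : desc E b ⊆ desc E c :=
  hc ▸ Set.subset_union_of_subset_right (Set.subset_biUnion_of_mem hb) _

theorem desc_inter_desc_eq_empty_of_subset {a c : V} {S : Set V}
    (hc : desc E c ⊆ {c} ∪ ⋃ s ∈ S, desc E s) (hca : c ∉ desc E a)
    (hS : ∀ s ∈ S, desc E a ∩ desc E s = ∅) : desc E a ∩ desc E c = ∅ := by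
  refine Set.eq_empty_iff_forall_notMem.2 fun z ⟨hza, hzc⟩ => ?_
  rcases hc hzc with rfl | hz
  · exact hca hza
  · obtain ⟨s, hs, hzs⟩ := Set.mem_iUnion₂.1 hz
    exact Set.notMem_empty z (hS s hs ▸ ⟨hza, hzs⟩)

end

theorem stmt4_general {V : Type*} (E : V → V → Prop) (U : Set V) (hU : Independent E U)
    (Q : Set (Set V)) (hQsub : ∀ p ∈ Q, p ⊆ U)
    (hQdisj : ∀ p ∈ Q, ∀ p' ∈ Q, p ≠ p' → p ∩ p' = ∅)
    (w : Set V → V)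
    (hw : ∀ p ∈ Q, desc E (w p) = {w p} ∪ ⋃ u ∈ p, desc E u)
    (hwnotdescU : ∀ p ∈ Q, ∀ u ∈ U \ ⋃₀ Q, w p ∉ desc E u)
    (hwnotdescw : ∀ p ∈ Q, ∀ p' ∈ Q, p ≠ p' → w p ∉ desc E (w p')) :
    Independent E ((U \ ⋃₀ Q) ∪ {v | ∃ p ∈ Q, v = w p}) := by
  have old_new : ∀ x ∈ U \ ⋃₀ Q, ∀ q ∈ Q, desc E x ∩ desc E (w q) = ∅ := fun x hx q hq =>
    desc_inter_desc_eq_empty_of_subset (hw q hq).subset (hwnotdescU q hq x hx) fun u hu =>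
      hU x hx.1 u (hQsub q hq hu) fun hxu => hx.2 ⟨q, hq, hxu ▸ hu⟩
  have new_new : ∀ p ∈ Q, ∀ q ∈ Q, p ≠ q → desc E (w p) ∩ desc E (w q) = ∅ := by
    intro p hp q hq hpq
    refine desc_inter_desc_eq_empty_of_subset (hw q hq).subset (hwnotdescw q hq p hp hpq.symm)
      fun b hb => ?_
    have hpb : w p ∉ desc E b := fun h =>
      hwnotdescw p hp q hq hpq (desc_subset_desc_of_mem (hw q hq) hb h)
    rw [Set.inter_comm]
    refine desc_inter_desc_eq_empty_of_subset (hw p hp).subset hpb fun u hu =>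
      hU b (hQsub q hq hb) u (hQsub p hp hu) ?_
    rintro rfl
    exact Set.notMem_empty b (hQdisj p hp q hq hpq ▸ ⟨hu, hb⟩)
  intro x hx y hy hxy
  rcases hx with hx | ⟨p, hp, rfl⟩ <;> rcases hy with hy | ⟨q, hq, rfl⟩
  · exact hU x hx.1 y hy.1 hxy
  · exact old_new x hx q hq
  · exact Set.inter_comm _ _ ▸ old_new y hy p hp
  · exact new_new p hp q hq fun h => hxy (h ▸ rfl)

theorem stmt4 {V : Type*} (E : V → V → Prop) (U : Set V) (hU : Independent E U)
    (Q : Set (Set V)) (hQsub : ∀ p ∈ Q, p ⊆ U)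
    (hQdisj : ∀ p ∈ Q, ∀ p' ∈ Q, p ≠ p' → p ∩ p' = ∅)
    (w : Set V → V)
    (hw : ∀ p ∈ Q, desc E (w p) = {w p} ∪ ⋃ u ∈ p, desc E u)
    (hwdist : ∀ p ∈ Q, ∀ p' ∈ Q, w p = w p' → p = p')
    (hwnotU : ∀ p ∈ Q, w p ∉ U)
    (hwnotdescU : ∀ p ∈ Q, ∀ u ∈ U \ ⋃₀ Q, w p ∉ desc E u)
    (hwnotdescw : ∀ p ∈ Q, ∀ p' ∈ Q, p ≠ p' → w p ∉ desc E (w p')) :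
    Independent E ((U \ ⋃₀ Q) ∪ {v | ∃ p ∈ Q, v = w p}) :=
  stmt4_general E U hU Q hQsub hQdisj w hw hwnotdescU hwnotdescw
end

section
/- Let Γ be a countable digraph of finite out-valency satisfying: (T1) for a root α, Γ = desc(α) and desc^s(α) ∩ desc^t(α) = ∅ for s ≠ t; and (T4) there is N such that for all l > N and vertices x, a ∈ Γ, if there exists b ∈ desc^l(x) with a directed edge from a to b, then a ∈ desc(x). Let X be a descendant-closed subset generated by finitely many vertices x_1,...,x_k, and let Y = ⋃_i B^N(x_i) where B^N(x) = ⋃_{0≤j≤N} desc^j(x). Then any automorphism of the induced subdigraph X which fixes Y pointwise extends to an automorphism of Γ (by the identity outside X). -/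
/-- `descArc E s u` : vertices reachable from `u` by an `s`-arc (a directed walk
of length `s` with no immediate backtracking). -/
def descArc {V : Type*} (E : V → V → Prop) (s : ℕ) (u : V) : Set V :=
  {v | ∃ f : ℕ → V, f 0 = u ∧ f s = v ∧ (∀ i, i < s → E (f i) (f (i + 1))) ∧
    ∀ i, 0 < i → i < s → f (i - 1) ≠ f (i + 1)}

/-!
A vertex `b ∈ X` outside `Y` is reached from some generator `xᵢ` by an `l`-arc with
`l > N`, so by (T4) every in-neighbour of `b` lies in `X`. Hence the only edges between `X` and
its complement enter `X` through `Y`, where `γ` is the identity, while `X` has no edges leaving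
it. Extending `γ` by the identity therefore preserves edges and non-edges.
-/

section Digraph

variable {V : Type*} {E : V → V → Prop}

lemma descArc_subset_desc (s : ℕ) (u : V) : descArc E s u ⊆ desc E u := by
  rintro v ⟨f, rfl, rfl, hedge, -⟩
  suffices ∀ i ≤ s, Relation.ReflTransGen E (f 0) (f i) from this s le_rfl
  intro i hi
  induction i with
  | zero => rfl
  | succ i ih => exact (ih (by omega)).tail (hedge i (by omega))

/-- Any walk can be shortened to an arc by cancelling immediate backtracking. -/
lemma exists_mem_descArc_of_mem_desc {u v : V} (h : v ∈ desc E u) :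
    ∃ s, v ∈ descArc E s u := by
  induction h with
  | refl => exact ⟨0, fun _ => u, rfl, rfl, by simp, by simp⟩
  | @tail b c _ hbc ih =>
    obtain ⟨s, f, h0, hs, hedge, hnb⟩ := ih
    by_cases hback : 0 < s ∧ f (s - 1) = c
    · exact ⟨s - 1, f, h0, hback.2, fun i hi => hedge i (by omega),
        fun i hi hi' => hnb i hi (by omega)⟩
    · refine ⟨s + 1, Function.update f (s + 1) c, ?_, by simp, ?_, ?_⟩
      · rwa [Function.update_of_ne (by omega)]
      · intro i hi
        rw [Function.update_apply, Function.update_apply]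
        rcases Nat.lt_or_ge i s with his | his
        · simpa [show i ≠ s + 1 by omega, show i ≠ s by omega] using hedge i his
        · obtain rfl : i = s := by omega
          simpa [hs] using hbc
      · intro i hi hi'
        rw [Function.update_apply, Function.update_apply]
        rcases Nat.lt_or_ge i s with his | his
        · simpa [show i - 1 ≠ s + 1 by omega, show i ≠ s by omega] using hnb i hi his
        · obtain rfl : i = s := by omega
          simpa [show i - 1 ≠ i + 1 by omega] using fun h => hback ⟨by omega, h⟩

lemma mem_iUnion_desc_of_edge {ι : Type*} {x : ι → V} {a b : V}
    (ha : a ∈ ⋃ i, desc E (x i)) (hab : E a b) : b ∈ ⋃ i, desc E (x i) := by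
  obtain ⟨i, hi⟩ := Set.mem_iUnion.mp ha
  exact Set.mem_iUnion.mpr ⟨i, Relation.ReflTransGen.tail hi hab⟩

lemma mem_iUnion_desc_of_edge_of_notMem_ball {ι : Type*} {x : ι → V} (N : ℕ)
    (hT4 : ∀ l, N < l → ∀ x a b : V, b ∈ descArc E l x → E a b → a ∈ desc E x)
    {a b : V} (hb : b ∈ ⋃ i, desc E (x i)) (hbY : b ∉ ⋃ i, ⋃ j ≤ N, descArc E j (x i))
    (hab : E a b) : a ∈ ⋃ i, desc E (x i) := by
  obtain ⟨i, hi⟩ := Set.mem_iUnion.mp hb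
  obtain ⟨l, hl⟩ := exists_mem_descArc_of_mem_desc hi
  have hNl : N < l := by
    by_contra! hlN
    exact hbY (Set.mem_iUnion.mpr ⟨i, Set.mem_iUnion₂.mpr ⟨l, hlN, hl⟩⟩)
  exact Set.mem_iUnion.mpr ⟨i, hT4 l hNl (x i) a b hl hab⟩

end Digraph

lemma Set.BijOn.exists_perm_eqOn {α : Type*} {f : α → α} {s : Set α} (hf : Set.BijOn f s s) :
    ∃ θ : Equiv.Perm α, (∀ v ∈ s, θ v = f v) ∧ ∀ v ∉ s, θ v = v := by
  classical
  exact ⟨Equiv.Perm.ofSubtype (hf.equiv f), fun v hv => Equiv.Perm.ofSubtype_apply_of_mem _ hv,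
    fun v hv => Equiv.Perm.ofSubtype_apply_of_not_mem _ hv⟩

theorem exists_equiv_edge_iff_of_bijOn {V : Type*} {E : V → V → Prop} {X Y : Set V} {γ : V → V}
    (hout : ∀ a ∈ X, ∀ b, E a b → b ∈ X) (hin : ∀ b ∈ X, b ∉ Y → ∀ a, E a b → a ∈ X)
    (hbij : Set.BijOn γ X X) (hedge : ∀ a ∈ X, ∀ b ∈ X, (E a b ↔ E (γ a) (γ b)))
    (hfix : ∀ y ∈ Y, γ y = y) :
    ∃ θ : V ≃ V, (∀ a b : V, E a b ↔ E (θ a) (θ b)) ∧ ∀ v ∈ X, θ v = γ v := by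
  obtain ⟨θ, hθX, hθ⟩ := hbij.exists_perm_eqOn
  have hγY : ∀ b ∈ X, b ∉ Y → γ b ∉ Y := fun b hb hbY hγb =>
    hbY (hbij.injOn (hbij.mapsTo hb) hb (hfix _ hγb) ▸ hγb)
  refine ⟨θ, fun a b => ?_, hθX⟩
  by_cases ha : a ∈ X <;> by_cases hb : b ∈ X
  · rw [hθX a ha, hθX b hb]
    exact hedge a ha b hb
  · rw [hθX a ha, hθ b hb]
    exact iff_of_false (fun h => hb (hout a ha b h)) fun h => hb (hout _ (hbij.mapsTo ha) b h)
  · rw [hθ a ha, hθX b hb]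
    by_cases hbY : b ∈ Y
    · rw [hfix b hbY]
    · exact iff_of_false (fun h => ha (hin b hb hbY a h))
        fun h => ha (hin _ (hbij.mapsTo hb) (hγY b hb hbY) a h)
  · rw [hθ a ha, hθ b hb]

theorem stmt9_general {V : Type*} (E : V → V → Prop)
    -- (T4):
    (N : ℕ)
    (hT4 : ∀ l, N < l → ∀ x a b : V, b ∈ descArc E l x → E a b → a ∈ desc E x)
    -- X is descendant-closed, generated by x₁,…,x_k ; Y is the union of the N-balls
    (k : ℕ) (x : Fin k → V) (X Y : Set V)
    (hX : X = ⋃ i, desc E (x i))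
    (hY : Y = ⋃ i, ⋃ j ≤ N, descArc E j (x i))
    -- γ is an automorphism of the induced subdigraph on X fixing Y pointwise
    (γ : V → V) (hbij : Set.BijOn γ X X)
    (hedge : ∀ a ∈ X, ∀ b ∈ X, (E a b ↔ E (γ a) (γ b)))
    (hfix : ∀ y ∈ Y, γ y = y) :
    ∃ θ : V ≃ V, (∀ a b : V, E a b ↔ E (θ a) (θ b)) ∧ ∀ v ∈ X, θ v = γ v := by
  subst hX hY
  exact exists_equiv_edge_iff_of_bijOn (fun a ha b hab => mem_iUnion_desc_of_edge ha hab)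
    (fun b hb hbY a hab => mem_iUnion_desc_of_edge_of_notMem_ball N hT4 hb hbY hab)
    hbij hedge hfix

theorem stmt9 {V : Type*} [Countable V] (E : V → V → Prop) (α : V)
    -- (T1): Γ = desc(α), finite out-valency, and the sets descᵗ(α) are pairwise disjoint
    (hroot : ∀ v : V, v ∈ desc E α)
    (hval : ∀ v : V, {w | E v w}.Finite)
    (hdisj : ∀ s t : ℕ, s ≠ t → descArc E s α ∩ descArc E t α = ∅)
    -- (T4):
    (N : ℕ)
    (hT4 : ∀ l, N < l → ∀ x a b : V, b ∈ descArc E l x → E a b → a ∈ desc E x)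
    -- X is descendant-closed, generated by x₁,…,x_k ; Y is the union of the N-balls
    (k : ℕ) (x : Fin k → V) (X Y : Set V)
    (hX : X = ⋃ i, desc E (x i))
    (hY : Y = ⋃ i, ⋃ j ≤ N, descArc E j (x i))
    -- γ is an automorphism of the induced subdigraph on X fixing Y pointwise
    (γ : V → V) (hbij : Set.BijOn γ X X)
    (hedge : ∀ a ∈ X, ∀ b ∈ X, (E a b ↔ E (γ a) (γ b)))
    (hfix : ∀ y ∈ Y, γ y = y) :
    ∃ θ : V ≃ V, (∀ a b : V, E a b ↔ E (θ a) (θ b)) ∧ ∀ v ∈ X, θ v = γ v :=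
  stmt9_general E N hT4 k x X Y hX hY γ hbij hedge hfix
end

section
/- Let A be a q-valent rooted directed tree T_q (q ≥ 2) and let Z be an infinite independent subset of A. Then the setwise stabilizer of Z in Aut(T_q) has index continuum (2^ℵ₀) in Aut(T_q). -/
/-- The edge relation of the `q`-valent rooted directed tree `T_q`: vertices are
finite sequences over `{0,…,q-1}`, with an edge from `w̄` to `w̄i`. -/
def treeEdge (q : ℕ) (w v : List (Fin q)) : Prop :=
  ∃ i : Fin q, v = w ++ [i]

/-- The setwise stabilizer of `Z` in the automorphism group of `T_q`. -/
def setStab (q : ℕ) (Z : Set (List (Fin q))) :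
    Subgroup (treeEdge q ≃r treeEdge q) where
  carrier := {f | ∀ z, z ∈ Z ↔ f z ∈ Z}
  one_mem' := by intro z; simp
  mul_mem' := by
    intro f g hf hg z
    simpa using (hg z).trans (hf (g z))
  inv_mem' := by
    intro f hf z
    have := (hf (f⁻¹ z)).symm
    simpa using this

namespace Stmt13
variable {q : ℕ}

lemma mem_desc_iff {u v : List (Fin q)} : v ∈ desc (treeEdge q) u ↔ u <+: v := by
  constructor
  · intro h
    induction h with
    | refl => exact List.prefix_refl _
    | tail _ e ih => obtain ⟨i, rfl⟩ := e; exact ih.trans (List.prefix_append _ _)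
  · rintro ⟨t, rfl⟩
    induction t using List.reverseRecOn with
    | nil => simpa using (show u ∈ desc (treeEdge q) u from Relation.ReflTransGen.refl)
    | append_singleton s i ih =>
        exact Relation.ReflTransGen.tail ih ⟨i, by rw [List.append_assoc]⟩

def applyAux (σ : List (Fin q) → Equiv.Perm (Fin q)) : List (Fin q) → List (Fin q) → List (Fin q)
  | _, [] => []
  | p, i :: tl => σ p i :: applyAux σ (p ++ [i]) tl

lemma applyAux_length (σ : List (Fin q) → Equiv.Perm (Fin q)) (p w : List (Fin q)) :
    (applyAux σ p w).length = w.length := by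
  induction w generalizing p with
  | nil => rfl
  | cons i tl ih => simp [applyAux, ih]

lemma applyAux_append (σ : List (Fin q) → Equiv.Perm (Fin q)) (p a b : List (Fin q)) :
    applyAux σ p (a ++ b) = applyAux σ p a ++ applyAux σ (p ++ a) b := by
  induction a generalizing p with
  | nil => simp [applyAux]
  | cons i tl ih => simp [applyAux, ih, List.append_assoc]

lemma applyAux_inj (σ : List (Fin q) → Equiv.Perm (Fin q)) (p : List (Fin q)) :
    ∀ w₁ w₂, applyAux σ p w₁ = applyAux σ p w₂ → w₁ = w₂ := by
  intro w₁
  induction w₁ generalizing p with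
  | nil =>
      intro w₂ h
      have := applyAux_length σ p w₂
      rw [← h] at this
      exact (List.eq_nil_of_length_eq_zero this.symm).symm
  | cons i tl ih =>
      intro w₂ h
      cases w₂ with
      | nil => simp [applyAux] at h
      | cons j tl₂ =>
          simp only [applyAux, List.cons.injEq] at h
          obtain ⟨h1, h2⟩ := h
          have hij : i = j := (σ p).injective h1
          subst hij
          exact congrArg _ (ih (p ++ [i]) tl₂ h2)

lemma applyAux_surj (σ : List (Fin q) → Equiv.Perm (Fin q)) :
    ∀ (u p : List (Fin q)), ∃ w, applyAux σ p w = u := by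
  intro u
  induction u with
  | nil => exact fun p => ⟨[], rfl⟩
  | cons j tu ih =>
      intro p
      obtain ⟨w, hw⟩ := ih (p ++ [(σ p).symm j])
      exact ⟨(σ p).symm j :: w, by simp [applyAux, hw]⟩

lemma applyAux_eq_self (σ : List (Fin q) → Equiv.Perm (Fin q)) (p w : List (Fin q))
    (h : ∀ l, p <+: l → l.length < p.length + w.length → σ l = 1) :
    applyAux σ p w = w := by
  induction w generalizing p with
  | nil => rfl
  | cons i tl ih =>
      have hp : σ p = 1 := h p (List.prefix_refl _) (by simp)
      simp only [applyAux, hp, Equiv.Perm.coe_one, id_eq]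
      refine congrArg _ (ih (p ++ [i]) ?_)
      intro l hl hlen
      refine h l ((List.prefix_append _ _).trans hl) ?_
      simp only [List.length_append, List.length_singleton, List.length_cons, List.length_nil] at hlen ⊢
      omega

lemma applyAux_congr (σ τ : List (Fin q) → Equiv.Perm (Fin q)) (p w : List (Fin q))
    (h : ∀ l, p <+: l → l.length < p.length + w.length → σ l = τ l) :
    applyAux σ p w = applyAux τ p w := by
  induction w generalizing p with
  | nil => rfl
  | cons i tl ih =>
      have hp : σ p = τ p := h p (List.prefix_refl _) (by simp)
      simp only [applyAux, hp]
      refine congrArg _ (ih (p ++ [i]) ?_)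
      intro l hl hlen
      refine h l ((List.prefix_append _ _).trans hl) ?_
      simp only [List.length_append, List.length_singleton, List.length_cons, List.length_nil] at hlen ⊢
      omega

noncomputable def autOfPerms (σ : List (Fin q) → Equiv.Perm (Fin q)) :
    treeEdge q ≃r treeEdge q where
  toEquiv := Equiv.ofBijective (applyAux σ [])
    ⟨fun w₁ w₂ h => applyAux_inj σ [] w₁ w₂ h, fun u => applyAux_surj σ u []⟩
  map_rel_iff' := by
    intro a b
    show treeEdge q (applyAux σ [] a) (applyAux σ [] b) ↔ treeEdge q a b
    constructor
    · rintro ⟨i, hi⟩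
      rcases b.eq_nil_or_concat' with rfl | ⟨b', j, rfl⟩
      · simp [applyAux] at hi
      · rw [applyAux_append] at hi
        simp only [List.nil_append, applyAux] at hi
        obtain ⟨h1, _⟩ := List.append_inj' hi rfl
        have : b' = a := applyAux_inj σ [] _ _ h1
        exact ⟨j, by rw [this]⟩
    · rintro ⟨i, rfl⟩
      exact ⟨σ a i, by rw [applyAux_append]; simp [applyAux]⟩

lemma autOfPerms_apply (σ : List (Fin q) → Equiv.Perm (Fin q)) (w : List (Fin q)) :
    autOfPerms σ w = applyAux σ [] w := rfl


variable {q : ℕ}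

open Classical in
noncomputable def sigmaS (v : ℕ → List (Fin q)) (x : ℕ → Fin q) (k : ℕ → ℕ) (c : ℕ → Fin q)
    (S : Set ℕ) (p : List (Fin q)) : Equiv.Perm (Fin q) :=
  if h : ∃ n, n ∈ S ∧ p = v (k n) then Equiv.swap (x (k h.choose)) (c h.choose) else 1

section Eval
variable {v : ℕ → List (Fin q)} {x : ℕ → Fin q} {k : ℕ → ℕ} {c : ℕ → Fin q}
variable (hvlen : ∀ j, (v j).length = j) (hk : StrictMono k)

include hvlen hk in
lemma sigmaS_eval {S : Set ℕ} {n : ℕ} (hn : n ∈ S) :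
    sigmaS v x k c S (v (k n)) = Equiv.swap (x (k n)) (c n) := by
  have h : ∃ n', n' ∈ S ∧ v (k n) = v (k n') := ⟨n, hn, rfl⟩
  simp only [sigmaS]
  rw [dif_pos h]
  obtain ⟨_, he⟩ := h.choose_spec
  have hlen : k n = k h.choose := by
    have := congrArg List.length he
    rwa [hvlen, hvlen] at this
  have : h.choose = n := hk.injective hlen.symm
  rw [this]

lemma sigmaS_one {S : Set ℕ} {p : List (Fin q)} (h : ∀ n, n ∈ S → p ≠ v (k n)) :
    sigmaS v x k c S p = 1 := by
  simp only [sigmaS]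
  rw [dif_neg]
  rintro ⟨n, hn, he⟩
  exact h n hn he

include hvlen hk in
lemma key_comp {S T : Set ℕ} {m : ℕ} (hmS : m ∈ S) (hmT : m ∉ T)
    (hagree : ∀ n, n < m → (n ∈ S ↔ n ∈ T)) {t : List (Fin q)}
    (hbound : k m + 1 + t.length ≤ k (m + 1)) :
    applyAux (sigmaS v x k c S) [] (v (k m) ++ x (k m) :: t) =
      applyAux (sigmaS v x k c T) [] (v (k m) ++ c m :: t) := by
  have hone : ∀ (U : Set ℕ) (i : Fin q), applyAux (sigmaS v x k c U) (v (k m) ++ [i]) t = t := by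
    intro U i
    apply applyAux_eq_self
    intro l hl hlen
    apply sigmaS_one
    intro n hn he
    subst he
    have h1 : k m + 1 ≤ k n := by
      have := hl.length_le
      simp [hvlen, List.length_append] at this ⊢
      omega
    have h2 : k n < k m + 1 + t.length := by
      simp only [List.length_append, List.length_singleton, hvlen] at hlen
      omega
    have hmn : m < n := hk.lt_iff_lt.mp (by omega)
    have : k (m + 1) ≤ k n := hk.monotone hmn
    omega
  have hmid1 : (sigmaS v x k c S (v (k m))) (x (k m)) = c m := by
    rw [sigmaS_eval hvlen hk hmS, Equiv.swap_apply_left]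
  have hmid2 : (sigmaS v x k c T (v (k m))) (c m) = c m := by
    rw [sigmaS_one (fun n hn he => ?_), Equiv.Perm.one_apply]
    have hkk : k m = k n := by rw [← hvlen (k m), ← hvlen (k n), he]
    exact hmT (hk.injective hkk ▸ hn)
  have hpre : applyAux (sigmaS v x k c S) [] (v (k m)) =
      applyAux (sigmaS v x k c T) [] (v (k m)) := by
    apply applyAux_congr
    intro l hl hlen
    simp only [List.length_nil, Nat.zero_add, hvlen] at hlen
    by_cases hs : ∃ n, n ∈ S ∧ l = v (k n)
    · obtain ⟨n, hn, rfl⟩ := hs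
      have hnm : n < m := hk.lt_iff_lt.mp (by rw [hvlen] at hlen; omega)
      rw [sigmaS_eval hvlen hk hn, sigmaS_eval hvlen hk ((hagree n hnm).mp hn)]
    · by_cases ht : ∃ n, n ∈ T ∧ l = v (k n)
      · obtain ⟨n, hn, rfl⟩ := ht
        have hnm : n < m := hk.lt_iff_lt.mp (by rw [hvlen] at hlen; omega)
        exact absurd ⟨n, (hagree n hnm).mpr hn, rfl⟩ hs
      · rw [sigmaS_one (fun n hn he => hs ⟨n, hn, he⟩),
          sigmaS_one (fun n hn he => ht ⟨n, hn, he⟩)]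
  rw [applyAux_append, applyAux_append]
  simp only [List.nil_append, applyAux]
  rw [hone S (x (k m)), hone T (c m), hmid1, hmid2, hpre]

end Eval
end Stmt13

open Stmt13 in
theorem stmt13 (q : ℕ) (hq : 2 ≤ q) (Z : Set (List (Fin q))) (hinf : Z.Infinite)
    (hind : ∀ z ∈ Z, ∀ z' ∈ Z, z ≠ z' →
      desc (treeEdge q) z ∩ desc (treeEdge q) z' = ∅) :
    Cardinal.mk ((treeEdge q ≃r treeEdge q) ⧸ setStab q Z) = Cardinal.continuum := by
  classical
  haveI : Nonempty (Fin q) := ⟨⟨0, by omega⟩⟩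
  -- antichain property
  have hanti : ∀ z ∈ Z, ∀ z' ∈ Z, z <+: z' → z = z' := by
    intro z hz z' hz' hp
    by_contra hne
    have h := hind z hz z' hz' hne
    have hmem : z' ∈ desc (treeEdge q) z ∩ desc (treeEdge q) z' :=
      ⟨Stmt13.mem_desc_iff.mpr hp, Stmt13.mem_desc_iff.mpr (List.prefix_refl _)⟩
    rw [h] at hmem
    exact hmem
  -- splitting step
  have hstep : ∀ p : List (Fin q), (Z ∩ desc (treeEdge q) p).Infinite →
      ∃ i, (Z ∩ desc (treeEdge q) (p ++ [i])).Infinite := by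
    intro p hp
    by_contra hno
    push_neg at hno
    try simp only [Set.not_infinite] at hno
    have hsub : Z ∩ desc (treeEdge q) p ⊆
        {p} ∪ ⋃ i, (Z ∩ desc (treeEdge q) (p ++ [i])) := by
      rintro z ⟨hz, hd⟩
      obtain ⟨r, rfl⟩ := Stmt13.mem_desc_iff.mp hd
      cases r with
      | nil => left; simp
      | cons i tr =>
          right
          exact Set.mem_iUnion.mpr ⟨i, hz, Stmt13.mem_desc_iff.mpr ⟨tr, by simp⟩⟩
    exact hp (((Set.finite_singleton p).union (Set.finite_iUnion hno)).subset hsub)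
  have hZinf0 : (Z ∩ desc (treeEdge q) ([] : List (Fin q))).Infinite := by
    have he : Z ∩ desc (treeEdge q) ([] : List (Fin q)) = Z := by
      ext z
      simp [Stmt13.mem_desc_iff, List.nil_prefix]
    rwa [he]
  -- the branch
  have hbr : ∃ (v : ℕ → List (Fin q)) (x : ℕ → Fin q), v 0 = [] ∧
      (∀ j, v (j+1) = v j ++ [x j]) ∧
      (∀ j, (Z ∩ desc (treeEdge q) (v j)).Infinite) := by
    choose nxt hnxt using hstep
    let VS : ℕ → {l : List (Fin q) // (Z ∩ desc (treeEdge q) l).Infinite} :=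
      fun j => Nat.rec ⟨[], hZinf0⟩ (fun _ pr => ⟨pr.1 ++ [nxt pr.1 pr.2], hnxt pr.1 pr.2⟩) j
    exact ⟨fun j => (VS j).1, fun j => nxt (VS j).1 (VS j).2, rfl, fun j => rfl,
      fun j => (VS j).2⟩
  obtain ⟨v, x, hv0, hvs, hvinf⟩ := hbr
  have hvlen : ∀ j, (v j).length = j := by
    intro j
    induction j with
    | zero => rw [hv0]; rfl
    | succ j ih => rw [hvs, List.length_append, ih]; rfl
  have hnobranch : ∀ j, v j ∉ Z := by
    intro j hj
    obtain ⟨z, hz⟩ := ((hvinf j).diff (Set.finite_singleton (v j))).nonempty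
    obtain ⟨⟨hz1, hz2⟩, hz3⟩ := hz
    exact hz3 (by simp [← hanti (v j) hj z hz1 (Stmt13.mem_desc_iff.mp hz2)])
  -- divergence extraction
  have hdiv : ∀ (d : ℕ) (z : List (Fin q)), z ∈ Z → ∀ K, z.length ≤ K + d → v K <+: z →
      ∃ k₁, K ≤ k₁ ∧ ∃ cc tt, cc ≠ x k₁ ∧ z = v k₁ ++ cc :: tt := by
    intro d
    induction d with
    | zero =>
        intro z hz K hlen hpre
        have hKz : (v K).length = z.length := by
          have h := hpre.length_le
          rw [hvlen] at h ⊢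
          omega
        have hzeq : v K = z := hpre.eq_of_length hKz
        exact absurd (hzeq ▸ hz) (hnobranch K)
    | succ d ih =>
        intro z hz K hlen hpre
        obtain ⟨r, hr⟩ := hpre
        cases r with
        | nil =>
            have hzeq : v K = z := by rw [← hr]; simp
            exact absurd (hzeq ▸ hz) (hnobranch K)
        | cons cc tt =>
            by_cases hcc : cc = x K
            · subst hcc
              have hpre2 : v (K+1) <+: z := ⟨tt, by rw [hvs, ← hr]; simp⟩
              have hlen2 : z.length ≤ (K+1) + d := by omega
              obtain ⟨k₁, hk₁, rest⟩ := ih z hz (K+1) hlen2 hpre2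
              exact ⟨k₁, by omega, rest⟩
            · exact ⟨K, le_refl K, cc, tt, hcc, hr.symm⟩
  -- mirror iteration
  have hmir : ∀ (d k₁ : ℕ) (cc : Fin q) (tt : List (Fin q)), tt.length ≤ d → cc ≠ x k₁ →
      (v k₁ ++ cc :: tt) ∈ Z →
      ∃ k', k₁ ≤ k' ∧ ∃ cc' tt', cc' ≠ x k' ∧ (v k' ++ cc' :: tt') ∈ Z ∧
        (v k' ++ x k' :: tt') ∉ Z := by
    intro d
    induction d with
    | zero =>
        intro k₁ cc tt hlen hcc hz
        by_cases hy : (v k₁ ++ x k₁ :: tt) ∈ Z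
        · have htt : tt = [] := List.eq_nil_of_length_eq_zero (by omega)
          subst htt
          have : v (k₁+1) ∈ Z := by rw [hvs]; exact hy
          exact absurd this (hnobranch (k₁+1))
        · exact ⟨k₁, le_refl _, cc, tt, hcc, hz, hy⟩
    | succ d ih =>
        intro k₁ cc tt hlen hcc hz
        by_cases hy : (v k₁ ++ x k₁ :: tt) ∈ Z
        · have hy' : v (k₁+1) ++ tt ∈ Z := by
            rw [hvs]
            simpa [List.append_assoc] using hy
          obtain ⟨k₂, hk₂, cc₂, tt₂, hcc₂, heq⟩ :=
            hdiv tt.length (v (k₁+1) ++ tt) hy' (k₁+1)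
              (by simp [hvlen]) ⟨tt, rfl⟩
          have hlen1 : (v (k₁+1) ++ tt).length = k₁ + 1 + tt.length := by
            simp [hvlen]
          have hlen2 : (v (k₁+1) ++ tt).length = k₂ + 1 + tt₂.length := by
            rw [heq]; simp [hvlen]; omega
          have hlen₂ : tt₂.length ≤ d := by omega
          obtain ⟨k', hk', rest⟩ := ih k₂ cc₂ tt₂ hlen₂ hcc₂ (heq ▸ hy')
          exact ⟨k', by omega, rest⟩
        · exact ⟨k₁, le_refl _, cc, tt, hcc, hz, hy⟩
  -- gadgets at arbitrary depth
  have hgad : ∀ K : ℕ, ∃ (k₁ : ℕ) (cc : Fin q) (tt : List (Fin q)), K ≤ k₁ ∧ cc ≠ x k₁ ∧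
      (v k₁ ++ cc :: tt) ∈ Z ∧ (v k₁ ++ x k₁ :: tt) ∉ Z := by
    intro K
    obtain ⟨z, hz, hzd⟩ := (hvinf K).nonempty
    obtain ⟨k₁, hk₁, cc, tt, hcc, heq⟩ :=
      hdiv z.length z hz K (by omega) (Stmt13.mem_desc_iff.mp hzd)
    obtain ⟨k', hk', cc', tt', h1, h2, h3⟩ :=
      hmir tt.length k₁ cc tt le_rfl hcc (heq ▸ hz)
    exact ⟨k', cc', tt', le_trans hk₁ hk', h1, h2, h3⟩
  -- the chosen sequence of gadgets
  have hseq : ∃ (k : ℕ → ℕ) (c : ℕ → Fin q) (t : ℕ → List (Fin q)),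
      (∀ n, k n + 1 + (t n).length ≤ k (n+1)) ∧
      (∀ n, (v (k n) ++ c n :: t n) ∈ Z) ∧
      (∀ n, (v (k n) ++ x (k n) :: t n) ∉ Z) := by
    choose gk gc gt hgk hgne hgmem hgnmem using hgad
    let KS : ℕ → ℕ := fun n => Nat.rec 0 (fun _ K => gk K + (gt K).length + 2) n
    refine ⟨fun n => gk (KS n), fun n => gc (KS n), fun n => gt (KS n), fun n => ?_,
      fun n => hgmem (KS n), fun n => hgnmem (KS n)⟩
    show gk (KS n) + 1 + (gt (KS n)).length ≤ gk (KS (n+1))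
    have h2 : KS (n+1) ≤ gk (KS (n+1)) := hgk (KS (n+1))
    have h1 : KS (n+1) = gk (KS n) + (gt (KS n)).length + 2 := rfl
    omega
  obtain ⟨k, c, t, hkb, hzmem, hymem⟩ := hseq
  have hk : StrictMono k := strictMono_nat_of_lt_succ (fun n => by have := hkb n; omega)
  -- the family of automorphisms
  have hFkey : ∀ (S T : Set ℕ) (m : ℕ), m ∈ S → m ∉ T → (∀ n, n < m → (n ∈ S ↔ n ∈ T)) →
      autOfPerms (sigmaS v x k c S) (v (k m) ++ x (k m) :: t m) =
        autOfPerms (sigmaS v x k c T) (v (k m) ++ c m :: t m) := by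
    intro S T m h1 h2 h3
    rw [autOfPerms_apply, autOfPerms_apply]
    exact key_comp hvlen hk h1 h2 h3 (hkb m)
  -- injectivity into the quotient
  have hinj : Function.Injective (fun S : Set ℕ =>
      (QuotientGroup.mk (autOfPerms (sigmaS v x k c S)) :
        (treeEdge q ≃r treeEdge q) ⧸ setStab q Z)) := by
    intro S T hST
    by_contra hne
    have hdne : ∃ n, ¬(n ∈ S ↔ n ∈ T) := by
      by_contra hall
      push_neg at hall
      exact hne (Set.ext fun n => (hall n))
    simp only at hST
    have hmem : (autOfPerms (sigmaS v x k c S))⁻¹ * autOfPerms (sigmaS v x k c T) ∈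
        setStab q Z := QuotientGroup.eq.mp hST
    set m := Nat.find hdne with hm_def
    have hm : ¬(m ∈ S ↔ m ∈ T) := Nat.find_spec hdne
    have hmin : ∀ n, n < m → (n ∈ S ↔ n ∈ T) := fun n hn => not_not.mp (Nat.find_min hdne hn)
    have hstab : ∀ z, z ∈ Z ↔
        ((autOfPerms (sigmaS v x k c S))⁻¹ * autOfPerms (sigmaS v x k c T)) z ∈ Z := hmem
    rcases (by tauto : (m ∈ S ∧ m ∉ T) ∨ (m ∈ T ∧ m ∉ S)) with ⟨h1, h2⟩ | ⟨h1, h2⟩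
    · have hkey := hFkey S T m h1 h2 hmin
      have happ : ((autOfPerms (sigmaS v x k c S))⁻¹ * autOfPerms (sigmaS v x k c T))
          (v (k m) ++ c m :: t m) = v (k m) ++ x (k m) :: t m := by
        rw [RelIso.mul_apply, ← hkey, RelIso.inv_apply_self]
      have h5 := (hstab (v (k m) ++ c m :: t m)).mp (hzmem m)
      rw [happ] at h5
      exact hymem m h5
    · have hmem2 : (autOfPerms (sigmaS v x k c T))⁻¹ * autOfPerms (sigmaS v x k c S) ∈
          setStab q Z := by
        have := (setStab q Z).inv_mem hmem
        simpa [mul_inv_rev] using this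
      have hstab2 : ∀ z, z ∈ Z ↔
          ((autOfPerms (sigmaS v x k c T))⁻¹ * autOfPerms (sigmaS v x k c S)) z ∈ Z := hmem2
      have hkey := hFkey T S m h1 h2 (fun n hn => (hmin n hn).symm)
      have happ : ((autOfPerms (sigmaS v x k c T))⁻¹ * autOfPerms (sigmaS v x k c S))
          (v (k m) ++ c m :: t m) = v (k m) ++ x (k m) :: t m := by
        rw [RelIso.mul_apply, ← hkey, RelIso.inv_apply_self]
      have h5 := (hstab2 (v (k m) ++ c m :: t m)).mp (hzmem m)
      rw [happ] at h5
      exact hymem m h5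
  -- cardinality computation
  apply le_antisymm
  · have s1 : Cardinal.mk ((treeEdge q ≃r treeEdge q) ⧸ setStab q Z) ≤
        Cardinal.mk (treeEdge q ≃r treeEdge q) :=
      Cardinal.mk_le_of_surjective (QuotientGroup.mk_surjective)
    have s2 : Cardinal.mk (treeEdge q ≃r treeEdge q) ≤
        Cardinal.mk (List (Fin q) → List (Fin q)) :=
      Cardinal.mk_le_of_injective (f := fun e => ⇑e) (fun a b h => DFunLike.coe_injective h)
    have s3 : Cardinal.mk (List (Fin q) → List (Fin q)) = Cardinal.continuum := by
      rw [← Cardinal.power_def, Cardinal.mk_eq_aleph0 (List (Fin q)),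
        Cardinal.aleph0_power_aleph0]
    exact le_trans s1 (le_trans s2 (le_of_eq s3))
  · have hle := Cardinal.mk_le_of_injective hinj
    rwa [Cardinal.mk_set, Cardinal.mk_nat, Cardinal.two_power_aleph0] at hle
end
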